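/- arXiv:1902.06274 — 3 statements merged into one kernel-verified Lean document; each statement's English description precedes it below -/
import Mathlib

section
/- Two outage hypotheses H1, H2 ∈ H_U (antichains in the downstream order) yield the same energized tree if and only if H1 = H2; that is, the map from uniquely identifiable hypotheses to energized components is injective. -/
/-- A rooted tree on vertex set `V`, given by a parent function. Edges are in
bijection with non-root nodes: the edge corresponding to a non-root node `v` is
`(parent v, v)`. The depth function guarantees the absence of cycles. -/
structure RTree (V : Type*) where
  root : V
  parent : V → V
  parent_root : parent root = root
  depth : V → ℕ
  depth_root : depth root = 0
  depth_lt : ∀ v, v ≠ root → depth (parent v) < depth v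

/-- Reachability in the graph obtained from the tree by deleting the edges
`(parent e, e)` for `e ∈ H` (an outage hypothesis `H` is a set of non-root
nodes, identifying each edge with its child endpoint). -/
def RTree.reachDel {V : Type*} (T : RTree V) (H : Set V) : V → V → Prop :=
  Relation.ReflTransGen (fun a b =>
    (a ≠ T.root ∧ T.parent a = b ∧ a ∉ H) ∨ (b ≠ T.root ∧ T.parent b = a ∧ b ∉ H))

/-- An outage hypothesis is an antichain in the downstream order if no outaged
edge lies (weakly) upstream of a distinct outaged edge. -/
def RTree.IsAntichainDown {V : Type*} (T : RTree V) (H : Set V) : Prop :=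
  ∀ e ∈ H, ∀ f ∈ H, (∃ n, T.parent^[n] e = f) → e = f

lemma RTree.depth_iterate_le {V : Type*} (T : RTree V) (n : ℕ) (v : V) :
    T.depth (T.parent^[n] v) ≤ T.depth v := by
  induction n with
  | zero => simp
  | succ n ih =>
    rw [Function.iterate_succ_apply']
    by_cases h : T.parent^[n] v = T.root
    · rw [h, T.parent_root]; exact h ▸ ih
    · exact le_trans (le_of_lt (T.depth_lt _ h)) ih

lemma RTree.reach_iff {V : Type*} (T : RTree V) (H : Set V)
    (h : H ⊆ {v | v ≠ T.root}) (v : V) :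
    T.reachDel H T.root v ↔ ∀ n, T.parent^[n] v ∉ H := by
  constructor
  · intro hr
    induction hr with
    | refl =>
      intro n hn
      rw [Function.iterate_fixed T.parent_root] at hn
      exact h hn rfl
    | tail _ step ih =>
      rcases step with ⟨hb, hpb, hbH⟩ | ⟨hc, hpc, hcH⟩
      · intro n hn
        rw [← hpb, ← Function.iterate_succ_apply] at hn
        exact ih _ hn
      · intro n
        cases n with
        | zero => simpa using hcH
        | succ n =>
          rw [Function.iterate_succ_apply, hpc]
          exact ih n
  · have key : ∀ d v, T.depth v = d → (∀ n, T.parent^[n] v ∉ H) →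
        T.reachDel H T.root v := by
      intro d
      induction d using Nat.strong_induction_on with
      | _ d ih =>
        intro v hd hv
        by_cases hr : v = T.root
        · subst hr; exact Relation.ReflTransGen.refl
        · have hpar : T.reachDel H T.root (T.parent v) := by
            refine ih (T.depth (T.parent v)) (hd ▸ T.depth_lt v hr) _ rfl ?_
            intro n hn
            rw [← Function.iterate_succ_apply] at hn
            exact hv _ hn
          exact hpar.tail (Or.inr ⟨hr, rfl, by simpa using hv 0⟩)
    exact key _ v rfl

lemma RTree.mem_of_reach_eq {V : Type*} (T : RTree V) (H1 H2 : Set V)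
    (h1 : H1 ⊆ {v | v ≠ T.root}) (h2 : H2 ⊆ {v | v ≠ T.root})
    (a1 : T.IsAntichainDown H1)
    (hset : {v | T.reachDel H1 T.root v} = {v | T.reachDel H2 T.root v})
    (e : V) (he : e ∈ H1) : e ∈ H2 := by
  have hne : e ≠ T.root := h1 he
  -- the parent of e is reachable under H1
  have hpar1 : ∀ n, T.parent^[n] (T.parent e) ∉ H1 := by
    intro n hn
    rw [← Function.iterate_succ_apply] at hn
    have heq := a1 e he _ hn ⟨n + 1, rfl⟩
    have : T.depth (T.parent^[n + 1] e) < T.depth e := by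
      calc T.depth (T.parent^[n + 1] e)
          = T.depth (T.parent^[n] (T.parent e)) := by
            rw [Function.iterate_succ_apply]
        _ ≤ T.depth (T.parent e) := T.depth_iterate_le n _
        _ < T.depth e := T.depth_lt e hne
    rw [← heq] at this
    exact lt_irrefl _ this
  have hpar2 : ∀ n, T.parent^[n] (T.parent e) ∉ H2 := by
    have : T.parent e ∈ {v | T.reachDel H2 T.root v} := by
      rw [← hset]
      exact (T.reach_iff H1 h1 _).2 hpar1
    exact (T.reach_iff H2 h2 _).1 this
  by_contra heH2
  have hall2 : ∀ n, T.parent^[n] e ∉ H2 := by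
    intro n
    cases n with
    | zero => simpa using heH2
    | succ n => rw [Function.iterate_succ_apply]; exact hpar2 n
  have : e ∈ {v | T.reachDel H1 T.root v} := by
    rw [hset]
    exact (T.reach_iff H2 h2 _).2 hall2
  exact ((T.reach_iff H1 h1 _).1 this) 0 (by simpa using he)

/-- Two uniquely identifiable outage hypotheses (antichains in the downstream
order) yield the same energized tree (component of the root after deleting the
outaged edges) if and only if they are equal: the map from uniquely
identifiable hypotheses to energized components is injective. -/
theorem energized_injective {V : Type*} (T : RTree V) (H1 H2 : Set V)
    (h1 : H1 ⊆ {v | v ≠ T.root}) (h2 : H2 ⊆ {v | v ≠ T.root})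
    (a1 : T.IsAntichainDown H1) (a2 : T.IsAntichainDown H2) :
    {v | T.reachDel H1 T.root v} = {v | T.reachDel H2 T.root v} ↔ H1 = H2 := by
  constructor
  · intro hset
    ext e
    exact ⟨fun he => T.mem_of_reach_eq H1 H2 h1 h2 a1 hset e he,
      fun he => T.mem_of_reach_eq H2 H1 h2 h1 a2 hset.symm e he⟩
  · rintro rfl; rfl
end

section
/- In a rooted tree where every non-root node has positive load, the vector of noise-free power flows on ALL edges uniquely determines the antichain outage hypothesis H ∈ H_U: edge e is in H if and only if its flow is 0 while the flow on every edge strictly upstream of e is positive. Hence a maximal sensor placement ensures outage identifiability when there are no zero-injection nodes. -/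
section Aux

variable {V : Type*} [Fintype V] [DecidableEq V]

lemma RTree.depth_iter_le (T : RTree V) : ∀ (n : ℕ) (v : V),
    T.depth (T.parent^[n] v) ≤ T.depth v := by
  intro n
  induction n with
  | zero => intro v; simp
  | succ n ih =>
    intro v
    rw [Function.iterate_succ_apply]
    refine (ih (T.parent v)).trans ?_
    by_cases h : v = T.root
    · rw [h, T.parent_root]
    · exact le_of_lt (T.depth_lt v h)

lemma RTree.iter_ne_self (T : RTree V) {v : V} (hv : v ≠ T.root) {n : ℕ} (hn : 0 < n) :
    T.parent^[n] v ≠ v := by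
  obtain ⟨m, rfl⟩ := Nat.exists_eq_succ_of_ne_zero hn.ne'
  rw [Function.iterate_succ_apply]
  intro h
  have h1 := T.depth_iter_le m (T.parent v)
  rw [h] at h1
  exact absurd (T.depth_lt v hv) (not_lt.mpr h1)

lemma RTree.flow_zero (T : RTree V) (l : V → ℝ) {H : Set V} {g : V} (hg : g ∈ H) :
    (∑ k : V, Set.indicator
      {k | (∀ n, T.parent^[n] k ∉ H) ∧ ∃ n, T.parent^[n] k = g} l k) = 0 := by
  apply Finset.sum_eq_zero
  intro k _
  apply Set.indicator_of_notMem
  rintro ⟨hall, n, hn⟩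
  exact hall n (hn ▸ hg)

lemma RTree.flow_pos (T : RTree V) (l : V → ℝ) (hl : ∀ v, v ≠ T.root → 0 < l v)
    (H : Set V) {f : V} (hanc : ∀ m, T.parent^[m] f ∉ H) (hf : f ≠ T.root) :
    0 < ∑ k : V, Set.indicator
      {k | (∀ n, T.parent^[n] k ∉ H) ∧ ∃ n, T.parent^[n] k = f} l k := by
  apply Finset.sum_pos'
  · intro k _
    by_cases hk : k ∈ {k | (∀ n, T.parent^[n] k ∉ H) ∧ ∃ n, T.parent^[n] k = f}
    · rw [Set.indicator_of_mem hk]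
      obtain ⟨-, n, hn⟩ := hk
      have hkroot : k ≠ T.root := by
        rintro rfl
        rw [Function.iterate_fixed T.parent_root n] at hn
        exact hf hn.symm
      exact (hl k hkroot).le
    · rw [Set.indicator_of_notMem hk]
  · refine ⟨f, Finset.mem_univ f, ?_⟩
    have hmem : f ∈ {k | (∀ n, T.parent^[n] k ∉ H) ∧ ∃ n, T.parent^[n] k = f} :=
      ⟨hanc, 0, rfl⟩
    rw [Set.indicator_of_mem hmem]
    exact hl f hf

end Aux

/-- When every non-root node has positive load, the vector of noise-free power
flows on all edges uniquely determines the antichain outage hypothesis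
`H ∈ H_U`: an edge `e` is outaged iff its flow is `0` while the flow on every
edge strictly upstream of `e` is positive.  Consequently the map from antichain
hypotheses to full flow vectors is injective, so a maximal sensor placement
ensures outage identifiability in the absence of zero-injection nodes.  Here
`flowOf H v` is the sum of loads of energized nodes in the subtree rooted at
`v` (zero on de-energized or outaged edges). -/
theorem maximal_placement_identifiability {V : Type*} [Fintype V] [DecidableEq V]
    (T : RTree V) (l : V → ℝ) (hl : ∀ v, v ≠ T.root → 0 < l v) :
    let flowOf : Set V → V → ℝ := fun H v => ∑ k : V,
      Set.indicator {k | (∀ n, T.parent^[n] k ∉ H) ∧ ∃ n, T.parent^[n] k = v} l k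
    (∀ H : Set V, H ⊆ {v | v ≠ T.root} →
      (∀ e ∈ H, ∀ f ∈ H, (∃ n, T.parent^[n] e = f) → e = f) →
      ∀ e, e ≠ T.root →
        (e ∈ H ↔ flowOf H e = 0 ∧
          ∀ f, f ≠ T.root → (∃ n, 0 < n ∧ T.parent^[n] e = f) → 0 < flowOf H f)) ∧
    (∀ H1 H2 : Set V, H1 ⊆ {v | v ≠ T.root} → H2 ⊆ {v | v ≠ T.root} →
      (∀ e ∈ H1, ∀ f ∈ H1, (∃ n, T.parent^[n] e = f) → e = f) →
      (∀ e ∈ H2, ∀ f ∈ H2, (∃ n, T.parent^[n] e = f) → e = f) →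
      flowOf H1 = flowOf H2 → H1 = H2) := by
  intro flowOf
  have part1 : ∀ H : Set V, H ⊆ {v | v ≠ T.root} →
      (∀ e ∈ H, ∀ f ∈ H, (∃ n, T.parent^[n] e = f) → e = f) →
      ∀ e, e ≠ T.root →
        (e ∈ H ↔ flowOf H e = 0 ∧
          ∀ f, f ≠ T.root → (∃ n, 0 < n ∧ T.parent^[n] e = f) → 0 < flowOf H f) := by
    intro H hsub hanti e he
    constructor
    · intro heH
      refine ⟨T.flow_zero l heH, ?_⟩
      rintro f hf ⟨n, hn0, hfn⟩
      have hanc : ∀ m, T.parent^[m] f ∉ H := by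
        intro m hm
        have hmem : T.parent^[m + n] e ∈ H := by
          rw [Function.iterate_add_apply, hfn]; exact hm
        have heq := hanti e heH _ hmem ⟨m + n, rfl⟩
        exact T.iter_ne_self (hsub heH) (Nat.lt_of_lt_of_le hn0 (Nat.le_add_left n m)) heq.symm
      exact T.flow_pos l hl H hanc hf
    · rintro ⟨hzero, hpos⟩
      by_contra heH
      by_cases hall : ∀ n, T.parent^[n] e ∉ H
      · exact (T.flow_pos l hl H hall he).ne' hzero
      · push_neg at hall
        obtain ⟨n, hn⟩ := hall
        have hn0 : 0 < n := by
          rcases Nat.eq_zero_or_pos n with h | h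
          · subst h; exact absurd hn heH
          · exact h
        have hgroot : T.parent^[n] e ≠ T.root := hsub hn
        have hpg := hpos _ hgroot ⟨n, hn0, rfl⟩
        exact hpg.ne' (T.flow_zero l hn)
  refine ⟨part1, ?_⟩
  intro H1 H2 h1 h2 a1 a2 hflow
  ext e
  by_cases he : e = T.root
  · subst he
    constructor
    · intro h; exact absurd rfl (h1 h)
    · intro h; exact absurd rfl (h2 h)
  · rw [part1 H1 h1 a1 e he, part1 H2 h2 a2 e he, hflow]
end

section
/- If some node z has zero load (l_z = 0) and z has exactly one child whose subtree carries all downstream load, then flow measurements alone on all edges cannot distinguish the outage hypothesis {parent edge of z} from the hypothesis consisting of all child edges of z: both yield identical flow vectors; thus flow measurements alone do not ensure outage identifiability in the presence of zero-injection nodes. -/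
/-- Zero-injection nodes defeat flow-only outage identification.  Suppose `z`
is a zero-injection node (`l z = 0`) with exactly one child (whose subtree thus
carries all load downstream of `z`).  Then the full vector of noise-free edge
flows under the outage hypothesis `H1 = {parent edge of z}` coincides with the
flow vector under the hypothesis `H2 = {child edges of z}`: flow measurements
alone cannot distinguish the two hypotheses, so they do not ensure outage
identifiability in the presence of zero-injection nodes.  As before,
`flowOf H v` is the sum of the loads of energized nodes in the subtree of `v`. -/
theorem zero_injection_flow_ambiguity {V : Type*} [Fintype V] [DecidableEq V]
    (T : RTree V) (l : V → ℝ) (z : V) (hz : z ≠ T.root) (hlz : l z = 0)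
    (huniq : ∃! c, T.parent c = z ∧ c ≠ z) :
    (fun v => ∑ k : V,
        Set.indicator
          {k | (∀ n, T.parent^[n] k ∉ ({z} : Set V)) ∧ ∃ n, T.parent^[n] k = v} l k)
      = (fun v => ∑ k : V,
        Set.indicator
          {k | (∀ n, T.parent^[n] k ∉ {c | T.parent c = z ∧ c ≠ z}) ∧
            ∃ n, T.parent^[n] k = v} l k) := by
  funext v
  apply Finset.sum_congr rfl
  intro k _
  by_cases hk : k = z
  · subst hk
    classical
    rw [Set.indicator_apply, Set.indicator_apply]
    split_ifs <;> simp [hlz]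
  · have hiff : (∀ n, T.parent^[n] k ∉ ({z} : Set V)) ↔
        (∀ n, T.parent^[n] k ∉ {c | T.parent c = z ∧ c ≠ z}) := by
      constructor
      · intro hA n hmem
        exact hA (n+1) (by
          simp only [Set.mem_singleton_iff, Function.iterate_succ_apply']
          exact hmem.1)
      · intro hB n hn
        simp only [Set.mem_singleton_iff] at hn
        have hex : ∃ m, T.parent^[m] k = z := ⟨n, hn⟩
        classical
        set m := Nat.find hex with hm
        have hms : T.parent^[m] k = z := Nat.find_spec hex
        have hm0 : m ≠ 0 := by
          intro h0
          rw [h0] at hms; exact hk hms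
        obtain ⟨m', hm'⟩ := Nat.exists_eq_succ_of_ne_zero hm0
        have hlt : T.parent^[m'] k ≠ z := by
          have := Nat.find_min hex (m := m') (by omega)
          simpa using this
        have h2 : T.parent^[m'.succ] k = z := by rw [← hm']; exact hms
        rw [Function.iterate_succ_apply'] at h2
        have hmem : T.parent^[m'] k ∈ {c | T.parent c = z ∧ c ≠ z} := ⟨h2, hlt⟩
        exact hB m' hmem
    by_cases hm : k ∈ {k | (∀ n, T.parent^[n] k ∉ ({z} : Set V)) ∧ ∃ n, T.parent^[n] k = v}
    · have hm2 : k ∈ {k | (∀ n, T.parent^[n] k ∉ {c | T.parent c = z ∧ c ≠ z}) ∧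
          ∃ n, T.parent^[n] k = v} := ⟨hiff.mp hm.1, hm.2⟩
      rw [Set.indicator_of_mem hm l, Set.indicator_of_mem hm2 l]
    · have hm2 : k ∉ {k | (∀ n, T.parent^[n] k ∉ {c | T.parent c = z ∧ c ≠ z}) ∧
          ∃ n, T.parent^[n] k = v} := fun h => hm ⟨hiff.mpr h.1, h.2⟩
      rw [Set.indicator_of_notMem hm l, Set.indicator_of_notMem hm2 l]
end
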